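/- Let g₊ and g₋ be C² conformal metrics on a Riemann surface Σ and φ a holomorphic k-differential (k ≥ 1), such that κ_{g₊} ≥ −1 + ‖φ‖²_{g₊}, κ_{g₋} ≤ −1 + ‖φ‖²_{g₋}, and κ_{g₊} ≤ 0 (equivalently ‖φ‖²_{g₊} ≤ 1). Write g₋ = e^w g₊. Then w satisfies (1/2)Δ_{g₊} w ≥ f(w) where f(t) = e^t − 1 for t ≥ 0 and f(t) = e^t − e^{(1−k)t} for t ≤ 0; in particular f is continuous, f(t) > 0 for t > 0, and f(t) ≤ 0 iff t ≤ 0. -/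

import Mathlib

/-- The Euclidean Laplacian of `f : ℂ → ℝ` at `z`, computed as the sum of the
second derivatives along the real and imaginary coordinate directions. -/
noncomputable def lapC (f : ℂ → ℝ) (z : ℂ) : ℝ :=
  deriv (deriv (fun t : ℝ => f (z + t))) 0 +
  deriv (deriv (fun t : ℝ => f (z + t * Complex.I))) 0

/-- The curvature of the conformal metric `e^u|dz|²`:
`κ = −(1/2)e^{−u}Δu`. -/
noncomputable def curvature (u : ℂ → ℝ) (z : ℂ) : ℝ :=
  -(1 / 2) * Real.exp (-u z) * lapC u z

/-!
Writing `g₋ = e^w g₊`, the transformation law of Gauss curvature under a conformal change,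
`κ_{g₋} = e^{-w}(κ_{g₊} - ½Δ_{g₊}w)`, gives `½Δ_{g₊}w = κ_{g₊} - e^w κ_{g₋}`. Inserting the two
curvature bounds, and `‖φ‖²_{g₋} = e^{-kw}‖φ‖²_{g₊}`, yields
`½Δ_{g₊}w ≥ e^w - 1 - S(e^{(1-k)w} - 1)` with `S = ‖φ‖²_{g₊} ∈ [0, 1]`. The right-hand side is
affine in `S`, so it is bounded below by its value at `S = 0` when `w ≥ 0` and at `S = 1` when
`w ≤ 0`, which is `f(w)`.
-/

open Filter Topology Real

theorem deriv_deriv_fun_sub {𝕜 E : Type*} [NontriviallyNormedField 𝕜] [NormedAddCommGroup E]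
    [NormedSpace 𝕜 E] {F G : 𝕜 → E} {x : 𝕜}
    (hF : ContDiffAt 𝕜 2 F x) (hG : ContDiffAt 𝕜 2 G x) :
    deriv (deriv fun t => F t - G t) x = deriv (deriv F) x - deriv (deriv G) x := by
  have hderiv : deriv (fun t => F t - G t) =ᶠ[𝓝 x] fun t => deriv F t - deriv G t := by
    filter_upwards [hF.eventually (by simp), hG.eventually (by simp)] with t hFt hGt
    exact deriv_fun_sub (hFt.differentiableAt (by simp)) (hGt.differentiableAt (by simp))
  rw [hderiv.deriv_eq]
  exact deriv_fun_sub ((hF.derivWithin (m := 1) (by norm_num)).differentiableAt one_ne_zero)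
    ((hG.derivWithin (m := 1) (by norm_num)).differentiableAt one_ne_zero)

theorem ContDiffAt.comp_add_ofReal_mul {u : ℂ → ℝ} {z : ℂ} (hu : ContDiffAt ℝ 2 u z) (c : ℂ) :
    ContDiffAt ℝ 2 (fun t : ℝ => u (z + t * c)) 0 :=
  ContDiffAt.comp (g := u) (0 : ℝ) (by simpa using hu)
    (contDiffAt_const.add (Complex.ofRealCLM.contDiff.contDiffAt.mul contDiffAt_const))

theorem lapC_sub {u v : ℂ → ℝ} {z : ℂ} (hu : ContDiffAt ℝ 2 u z) (hv : ContDiffAt ℝ 2 v z) :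
    lapC (fun x => u x - v x) z = lapC u z - lapC v z := by
  have hu₁ := hu.comp_add_ofReal_mul 1
  have hv₁ := hv.comp_add_ofReal_mul 1
  simp only [mul_one] at hu₁ hv₁
  rw [lapC, lapC, lapC, deriv_deriv_fun_sub hu₁ hv₁,
    deriv_deriv_fun_sub (hu.comp_add_ofReal_mul _) (hv.comp_add_ofReal_mul _)]
  ring

/-- The conformal change formula `κ_{e^w g} = e^{-w}(κ_g - ½Δ_g w)` for `g = e^u|dz|²` and
`w = v - u`, solved for `½Δ_g w`. -/
theorem half_exp_neg_mul_lapC_sub {u v : ℂ → ℝ} {z : ℂ} (hu : ContDiffAt ℝ 2 u z)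
    (hv : ContDiffAt ℝ 2 v z) :
    1 / 2 * (exp (-u z) * lapC (fun x => v x - u x) z) =
      curvature u z - exp (v z - u z) * curvature v z := by
  rw [lapC_sub hv hu, curvature, curvature, exp_sub, exp_neg, exp_neg]
  field_simp
  ring

noncomputable def comparisonFun (k t : ℝ) : ℝ :=
  if 0 ≤ t then exp t - 1 else exp t - exp ((1 - k) * t)

theorem continuous_comparisonFun (k : ℝ) : Continuous (comparisonFun k) := by
  refine Continuous.if_le (by fun_prop) (by fun_prop) continuous_const continuous_id ?_
  intro t ht
  simp [← ht]

theorem comparisonFun_pos (k : ℝ) {t : ℝ} (ht : 0 < t) : 0 < comparisonFun k t := by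
  rw [comparisonFun, if_pos ht.le, sub_pos]
  exact one_lt_exp_iff.mpr ht

theorem comparisonFun_nonpos_iff {k : ℝ} (hk : 0 ≤ k) (t : ℝ) :
    comparisonFun k t ≤ 0 ↔ t ≤ 0 := by
  refine ⟨fun h => not_lt.mp fun ht => (comparisonFun_pos k ht).not_ge h, fun ht => ?_⟩
  rcases ht.eq_or_lt with rfl | ht
  · simp [comparisonFun]
  rw [comparisonFun, if_neg ht.not_ge, sub_nonpos, exp_le_exp]
  nlinarith

theorem comparisonFun_le {k S : ℝ} (hk : 1 ≤ k) (hS₀ : 0 ≤ S) (hS₁ : S ≤ 1) (t : ℝ) :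
    comparisonFun k t ≤ exp t - 1 - S * (exp ((1 - k) * t) - 1) := by
  rw [comparisonFun]
  split_ifs with ht
  · have : exp ((1 - k) * t) ≤ 1 := exp_le_one_iff.mpr (by nlinarith)
    nlinarith
  · have : 1 ≤ exp ((1 - k) * t) := one_le_exp_iff.mpr (by nlinarith)
    nlinarith

theorem comparisonFun_le_sub_exp_mul {k a b P κa κb : ℝ} (hk : 1 ≤ k) (hP : 0 ≤ P)
    (hPa : P * exp (-k * a) ≤ 1) (ha : κa ≥ -1 + P * exp (-k * a))
    (hb : κb ≤ -1 + P * exp (-k * b)) :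
    comparisonFun k (b - a) ≤ κa - exp (b - a) * κb := by
  have hexp : exp (b - a) * exp (-k * b) = exp ((1 - k) * (b - a)) * exp (-k * a) := by
    rw [← exp_add, ← exp_add]
    ring_nf
  have hb' := mul_le_mul_of_nonneg_left hb (exp_pos (b - a)).le
  calc comparisonFun k (b - a)
      ≤ exp (b - a) - 1 - P * exp (-k * a) * (exp ((1 - k) * (b - a)) - 1) :=
        comparisonFun_le hk (by positivity) hPa _
    _ ≤ κa - exp (b - a) * κb := by nlinarith

theorem stmt19_general (k : ℕ) (hk : 1 ≤ k) (Ω : Set ℂ) (hΩ : IsOpen Ω)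
    (uPlus uMinus : ℂ → ℝ)
    (hup : ContDiffOn ℝ 2 uPlus Ω) (hum : ContDiffOn ℝ 2 uMinus Ω)
    (φ : ℂ → ℂ)
    (hsuper : ∀ z ∈ Ω, curvature uPlus z ≥
      -1 + ‖φ z‖ ^ 2 * Real.exp (-(k : ℝ) * uPlus z))
    (hsubsol : ∀ z ∈ Ω, curvature uMinus z ≤
      -1 + ‖φ z‖ ^ 2 * Real.exp (-(k : ℝ) * uMinus z))
    (hnonpos : ∀ z ∈ Ω,
      ‖φ z‖ ^ 2 * Real.exp (-(k : ℝ) * uPlus z) ≤ 1)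
    (w : ℂ → ℝ) (hw : ∀ z, w z = uMinus z - uPlus z)
    (f : ℝ → ℝ)
    (hf : ∀ t : ℝ, f t =
      if 0 ≤ t then Real.exp t - 1 else Real.exp t - Real.exp ((1 - (k : ℝ)) * t)) :
    (∀ z ∈ Ω, (1 / 2) * (Real.exp (-uPlus z) * lapC w z) ≥ f (w z)) ∧
    Continuous f ∧ (∀ t : ℝ, 0 < t → 0 < f t) ∧ (∀ t : ℝ, f t ≤ 0 ↔ t ≤ 0) := by
  obtain rfl : f = comparisonFun k := funext hf
  obtain rfl : w = fun z => uMinus z - uPlus z := funext hw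
  refine ⟨fun z hz => ?_, continuous_comparisonFun k, fun t => comparisonFun_pos k,
    comparisonFun_nonpos_iff k.cast_nonneg⟩
  rw [half_exp_neg_mul_lapC_sub (hup.contDiffAt (hΩ.mem_nhds hz))
    (hum.contDiffAt (hΩ.mem_nhds hz))]
  exact comparisonFun_le_sub_exp_mul (by exact_mod_cast hk) (by positivity) (hnonpos z hz)
    (hsuper z hz) (hsubsol z hz)

/-- in a conformal chart `Ω ⊆ ℂ` of the Riemann surface `Σ`:
let `g₊ = e^{u₊}|dz|²`, `g₋ = e^{u₋}|dz|²` be `C²` conformal metrics and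
`φ = φ(z)dz^k` a holomorphic `k`-differential (`k ≥ 1`), with
`κ_{g₊} ≥ −1 + ‖φ‖²_{g₊}`, `κ_{g₋} ≤ −1 + ‖φ‖²_{g₋}` and `κ_{g₊} ≤ 0`
(equivalently `‖φ‖²_{g₊} ≤ 1`), where `‖φ‖²_g = |φ|²e^{−ku}`.  Writing
`g₋ = e^w g₊` (i.e. `w = u₋ − u₊`), one has `(1/2)Δ_{g₊}w ≥ f(w)` on `Ω`,
where `Δ_{g₊}w = e^{−u₊}Δw`, `f(t) = e^t − 1` for `t ≥ 0` and
`f(t) = e^t − e^{(1−k)t}` for `t ≤ 0`; moreover `f` is continuous,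
`f(t) > 0` for `t > 0`, and `f(t) ≤ 0 ↔ t ≤ 0`. -/
theorem stmt19 (k : ℕ) (hk : 1 ≤ k) (Ω : Set ℂ) (hΩ : IsOpen Ω)
    (uPlus uMinus : ℂ → ℝ)
    (hup : ContDiffOn ℝ 2 uPlus Ω) (hum : ContDiffOn ℝ 2 uMinus Ω)
    (φ : ℂ → ℂ) (hφ : DifferentiableOn ℂ φ Ω)
    (hsuper : ∀ z ∈ Ω, curvature uPlus z ≥
      -1 + ‖φ z‖ ^ 2 * Real.exp (-(k : ℝ) * uPlus z))
    (hsubsol : ∀ z ∈ Ω, curvature uMinus z ≤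
      -1 + ‖φ z‖ ^ 2 * Real.exp (-(k : ℝ) * uMinus z))
    (hnonpos : ∀ z ∈ Ω,
      ‖φ z‖ ^ 2 * Real.exp (-(k : ℝ) * uPlus z) ≤ 1)
    (w : ℂ → ℝ) (hw : ∀ z, w z = uMinus z - uPlus z)
    (f : ℝ → ℝ)
    (hf : ∀ t : ℝ, f t =
      if 0 ≤ t then Real.exp t - 1 else Real.exp t - Real.exp ((1 - (k : ℝ)) * t)) :
    (∀ z ∈ Ω, (1 / 2) * (Real.exp (-uPlus z) * lapC w z) ≥ f (w z)) ∧
    Continuous f ∧ (∀ t : ℝ, 0 < t → 0 < f t) ∧ (∀ t : ℝ, f t ≤ 0 ↔ t ≤ 0) :=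
  stmt19_general k hk Ω hΩ uPlus uMinus hup hum φ hsuper hsubsol hnonpos w hw f hf
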